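/- Let A₁,…,Aₙ be a finite set of compatible observables and let ([G_λ])_{λ∈Λ} be a monotonically decreasing net of equivalence classes of joint observables of A₁,…,Aₙ. Then there exists a joint observable G̃ such that G̃ ⪯ G_λ for every λ, and for any observable B, if B ⪯ G_λ for all λ then B ⪯ G̃. -/

import Mathlib

noncomputable section

open scoped BigOperators

variable {H : Type*} [NormedAddCommGroup H] [InnerProductSpace ℂ H] [CompleteSpace H]

/-- A Markov kernel from `Ω₂` to `Ω₁`: nonnegative entries, columns summing to 1. -/
def IsMarkov {Ω₁ Ω₂ : Type*} [Fintype Ω₁] (p : Ω₁ → Ω₂ → ℝ) : Prop :=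
  (∀ x y, 0 ≤ p x y) ∧ ∀ y, ∑ x, p x y = 1

/-- A finite-outcome observable (POVM): positive operators summing to the identity. -/
def IsObservable {Ω : Type*} [Fintype Ω] (A : Ω → H →L[ℂ] H) : Prop :=
  (∀ x, (A x).IsPositive) ∧ ∑ x, A x = 1

/-- Post-processing of `A` by the kernel `p`. -/
def pproc {Ω₁ Ω₂ : Type*} [Fintype Ω₂] (p : Ω₁ → Ω₂ → ℝ) (A : Ω₂ → H →L[ℂ] H) :
    Ω₁ → H →L[ℂ] H := fun x => ∑ y, (p x y : ℂ) • A y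

/-- `A ⪯ B` : `A` is a post-processing of `B`. -/
def PP {Ω₁ Ω₂ : Type*} [Fintype Ω₁] [Fintype Ω₂] (A : Ω₁ → H →L[ℂ] H)
    (B : Ω₂ → H →L[ℂ] H) : Prop := ∃ p, IsMarkov p ∧ A = pproc p B

/-- `G` is a joint observable of the observables `A ℓ`. -/
def IsJoint {n : ℕ} {Ω : Fin n → Type*} [∀ ℓ, Fintype (Ω ℓ)] [∀ ℓ, DecidableEq (Ω ℓ)]
    (A : ∀ ℓ, Ω ℓ → H →L[ℂ] H) (G : (∀ ℓ, Ω ℓ) → H →L[ℂ] H) : Prop :=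
  IsObservable G ∧ ∀ ℓ xℓ, (∑ x : ∀ ℓ, Ω ℓ, if x ℓ = xℓ then G x else 0) = A ℓ xℓ

/-! Post-processing `(p, B) ↦ pproc p B` is continuous and Markov kernels form a compact set, so
`{A | A ⪯ B}` is compact and `⪯` is a closed relation. Along an ultrafilter refining `atTop`, the
net `G` eventually lies in the compact set `{A | A ⪯ G l₀}`, hence converges to some `G̃`. Being a
joint observable of the `A ℓ` is a closed condition, so `G̃` is one; and since `G l ⪯ G l₀` for
all large `l`, resp. `B ⪯ G l` for all `l`, closedness of `⪯` gives `G̃ ⪯ G l₀` and `B ⪯ G̃`. -/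

open Filter Topology

lemma ContinuousLinearMap.isClosed_setOf_isPositive :
    IsClosed {T : H →L[ℂ] H | T.IsPositive} := by
  simp_rw [← ContinuousLinearMap.nonneg_iff_isPositive]
  exact isClosed_Ici

lemma isClosed_setOf_isObservable {Ω : Type*} [Fintype Ω] :
    IsClosed {A : Ω → H →L[ℂ] H | IsObservable A} := by
  simp only [IsObservable, Set.ofPred_and, Set.ofPred_forall]
  exact (isClosed_iInter fun x =>
      ContinuousLinearMap.isClosed_setOf_isPositive.preimage (continuous_apply x)).inter
    (isClosed_eq (continuous_finsetSum _ fun x _ =>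
      continuous_apply (A := fun _ : Ω => H →L[ℂ] H) x) continuous_const)

lemma isClosed_setOf_isJoint {n : ℕ} {Ω : Fin n → Type*} [∀ ℓ, Fintype (Ω ℓ)]
    [∀ ℓ, DecidableEq (Ω ℓ)] (A : ∀ ℓ, Ω ℓ → H →L[ℂ] H) :
    IsClosed {G : (∀ ℓ, Ω ℓ) → H →L[ℂ] H | IsJoint A G} := by
  simp only [IsJoint, Set.ofPred_and, Set.ofPred_forall]
  refine isClosed_setOf_isObservable.inter <| isClosed_iInter fun ℓ => isClosed_iInter fun xℓ =>
    isClosed_eq (continuous_finsetSum _ fun x _ => ?_) continuous_const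
  split_ifs
  exacts [continuous_apply x, continuous_const]

lemma isCompact_setOf_isMarkov {Ω₁ Ω₂ : Type*} [Fintype Ω₁] :
    IsCompact {p : Ω₁ → Ω₂ → ℝ | IsMarkov p} := by
  have hclosed : IsClosed {p : Ω₁ → Ω₂ → ℝ | IsMarkov p} := by
    simp only [IsMarkov, Set.ofPred_and, Set.ofPred_forall]
    exact (isClosed_iInter fun x => isClosed_iInter fun y =>
        isClosed_le continuous_const (by fun_prop)).inter
      (isClosed_iInter fun y => isClosed_eq (by fun_prop) continuous_const)
  refine (isCompact_univ_pi fun _ => isCompact_univ_pi fun _ => isCompact_Icc (a := (0 : ℝ))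
    (b := 1)).of_isClosed_subset hclosed fun p hp x _ y _ => ⟨hp.1 x y, ?_⟩
  calc p x y ≤ ∑ x', p x' y := Finset.single_le_sum (fun x' _ => hp.1 x' y) (Finset.mem_univ x)
    _ = 1 := hp.2 y

lemma continuous_pproc {Ω₁ Ω₂ : Type*} [Fintype Ω₂] :
    Continuous fun x : (Ω₁ → Ω₂ → ℝ) × (Ω₂ → H →L[ℂ] H) => pproc x.1 x.2 := by
  unfold pproc
  fun_prop

lemma isCompact_setOf_pp {Ω₁ Ω₂ : Type*} [Fintype Ω₁] [Fintype Ω₂] (B : Ω₂ → H →L[ℂ] H) :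
    IsCompact {A : Ω₁ → H →L[ℂ] H | PP A B} := by
  have : {A : Ω₁ → H →L[ℂ] H | PP A B} = (pproc · B) '' {p | IsMarkov p} := by
    ext A
    simp only [PP, Set.mem_ofPred_eq, Set.mem_image, eq_comm]
  rw [this]
  exact isCompact_setOf_isMarkov.image
    (continuous_pproc.comp (.prodMk continuous_id continuous_const))

lemma isClosed_setOf_pp {Ω₁ Ω₂ : Type*} [Fintype Ω₁] [Fintype Ω₂] :
    IsClosed {x : (Ω₁ → H →L[ℂ] H) × (Ω₂ → H →L[ℂ] H) | PP x.1 x.2} := by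
  rw [isClosed_iff_ultrafilter]
  intro x u hu hPP
  choose! r hr using fun (y : (Ω₁ → H →L[ℂ] H) × (Ω₂ → H →L[ℂ] H)) (hy : PP y.1 y.2) => hy
  obtain ⟨p, hp, hrp⟩ := isCompact_setOf_isMarkov.ultrafilter_le_nhds (u.map r)
    (le_principal_iff.mpr <| mem_map.mpr (mem_of_superset hPP fun y hy => (hr y hy).1))
  have hrp : Tendsto r u (𝓝 p) := hrp
  have hfst : Tendsto Prod.fst (u : Filter _) (𝓝 x.1) := (continuous_fst.tendsto x).mono_left hu
  have hsnd : Tendsto Prod.snd (u : Filter _) (𝓝 x.2) := (continuous_snd.tendsto x).mono_left hu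
  have hlim := (continuous_pproc.tendsto (p, x.2)).comp (hrp.prodMk_nhds hsnd)
  exact ⟨p, hp, tendsto_nhds_unique_of_eventuallyEq hfst hlim
    (mem_of_superset hPP fun y hy => (hr y hy).2)⟩

/-- A monotonically decreasing net of joint observables has a lower bound among the
joint observables, which upper bounds every common lower bound. -/
theorem decreasing_net_joint {n : ℕ} {Ω : Fin n → Type*}
    [∀ ℓ, Fintype (Ω ℓ)] [∀ ℓ, DecidableEq (Ω ℓ)]
    {Λ : Type*} [Preorder Λ] [Nonempty Λ]
    (hdir : ∀ a b : Λ, ∃ c, a ≤ c ∧ b ≤ c)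
    (A : ∀ ℓ, Ω ℓ → H →L[ℂ] H)
    (G : Λ → ((∀ ℓ, Ω ℓ) → H →L[ℂ] H))
    (hGj : ∀ l, IsJoint A (G l))
    (hmono : ∀ l l', l ≤ l' → PP (G l') (G l)) :
    ∃ Gt : (∀ ℓ, Ω ℓ) → H →L[ℂ] H, IsJoint A Gt ∧ (∀ l, PP Gt (G l)) ∧
      ∀ (Ω' : Type) [Fintype Ω'], ∀ B : Ω' → H →L[ℂ] H, IsObservable B →
        (∀ l, PP B (G l)) → PP B Gt := by
  have : IsDirected Λ (· ≤ ·) := ⟨hdir⟩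
  obtain ⟨l₀⟩ := ‹Nonempty Λ›
  let U : Ultrafilter Λ := .of atTop
  have hU : ∀ l, ∀ᶠ l' in (U : Filter Λ), l ≤ l' := fun l =>
    Ultrafilter.of_le _ (eventually_ge_atTop l)
  obtain ⟨Gt, -, hGt⟩ := (isCompact_setOf_pp (G l₀)).ultrafilter_le_nhds (U.map G)
    (le_principal_iff.mpr <| (hU l₀).mono fun l => hmono l₀ l)
  have hGt : Tendsto G U (𝓝 Gt) := hGt
  refine ⟨Gt, (isClosed_setOf_isJoint A).mem_of_tendsto hGt (.of_forall hGj), fun l => ?_,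
    fun Ω' _ B _ hB => ?_⟩
  · exact isClosed_setOf_pp.mem_of_tendsto (hGt.prodMk_nhds tendsto_const_nhds)
      ((hU l).mono fun l' => hmono l l')
  · exact isClosed_setOf_pp.mem_of_tendsto (tendsto_const_nhds.prodMk_nhds hGt) (.of_forall hB)
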